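/- For any d ≥ 1, the ratio A_d(√d) = I_{d/2}(√d)/I_{d/2−1}(√d) of modified Bessel functions satisfies 2/3 < √d · A_d(√d) < 1. -/

import Mathlib

/-!
Let `a_m` be the `m`-th term of the series of `I_ν(x)`. Shifting the index of `Σ m a_m` gives
`x I_{ν+1}(x) = 2 Σ m a_m`, so `x I_{ν+1}(x) / I_ν(x)` is twice the mean of `m` under the
weights `a_m`. When `x² = 2(ν + 1)`, which is the case `x = √d`, `ν = d/2 - 1`, the first two
weights satisfy `a_0 = 2 a_1`; hence `Σ (3m - 1) a_m > 0` and that mean exceeds `1/3`. For the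
upper bound, the `m`-th term of `x I_{ν+1}(x)` is `a_m · x² / (2(m + ν + 1)) ≤ a_m`, strictly
so for `m ≥ 1`.
-/

open Real

/-- Modified Bessel function of the first kind of order `α`:
`I_α(x) = Σ_{m≥0} (x/2)^(2m+α) / (m! Γ(m+α+1))`. -/
noncomputable def besselI (α x : ℝ) : ℝ :=
  ∑' m : ℕ, (x / 2) ^ (2 * (m : ℝ) + α) / ((m.factorial : ℝ) * Real.Gamma ((m : ℝ) + α + 1))

/-- `A_d(κ) = I_{d/2}(κ) / I_{d/2−1}(κ)`, the norm of the mean of the von Mises–Fisher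
distribution with concentration `κ` on `S^{d−1}`. -/
noncomputable def vmfMeanNorm (d : ℕ) (κ : ℝ) : ℝ :=
  besselI ((d : ℝ) / 2) κ / besselI ((d : ℝ) / 2 - 1) κ

noncomputable def besselITerm (α x : ℝ) (m : ℕ) : ℝ :=
  (x / 2) ^ (2 * (m : ℝ) + α) / ((m.factorial : ℝ) * Real.Gamma ((m : ℝ) + α + 1))

section

variable {α x : ℝ}

theorem besselITerm_pos (hα : -1 < α) (hx : 0 < x) (m : ℕ) : 0 < besselITerm α x m := by
  have hΓ : 0 < Gamma ((m : ℝ) + α + 1) :=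
    Gamma_pos_of_pos (by linarith [m.cast_nonneg (α := ℝ)])
  unfold besselITerm
  positivity

theorem besselITerm_order_add_one (hx : 0 < x) {m : ℕ} (hm : (m : ℝ) + α + 1 ≠ 0) :
    besselITerm (α + 1) x m = besselITerm α x m * (x / 2 / (m + α + 1)) := by
  have hpow : (x / 2) ^ (2 * (m : ℝ) + (α + 1)) = (x / 2) ^ (2 * (m : ℝ) + α) * (x / 2) := by
    rw [← add_assoc, rpow_add (by positivity), rpow_one]
  have hΓ :
      Gamma ((m : ℝ) + (α + 1) + 1) = ((m : ℝ) + α + 1) * Gamma ((m : ℝ) + α + 1) := by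
    rw [← Gamma_add_one hm]
    ring_nf
  unfold besselITerm
  rw [hpow, hΓ, div_mul_div_comm]
  ring

theorem succ_mul_besselITerm_succ (hx : 0 < x) (m : ℕ) :
    ((m + 1 : ℕ) : ℝ) * besselITerm α x (m + 1) = x / 2 * besselITerm (α + 1) x m := by
  have hpow : (x / 2) ^ (2 * ((m + 1 : ℕ) : ℝ) + α) =
      (x / 2) ^ (2 * (m : ℝ) + (α + 1)) * (x / 2) := by
    rw [← rpow_add_one (by positivity)]
    push_cast
    ring_nf
  have hΓ : Gamma (((m + 1 : ℕ) : ℝ) + α + 1) = Gamma ((m : ℝ) + (α + 1) + 1) := by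
    push_cast
    ring_nf
  have hm : ((m + 1 : ℕ) : ℝ) ≠ 0 := by positivity
  unfold besselITerm
  rw [hpow, hΓ, Nat.factorial_succ, Nat.cast_mul]
  field_simp

theorem besselITerm_succ (hx : 0 < x) {m : ℕ} (hm : (m : ℝ) + α + 1 ≠ 0) :
    besselITerm α x (m + 1) = besselITerm α x m * ((x / 2) ^ 2 / ((m + 1) * (m + α + 1))) := by
  have h := succ_mul_besselITerm_succ (α := α) hx m
  rw [besselITerm_order_add_one hx hm] at h
  push_cast at h
  field_simp at h ⊢
  linear_combination h

theorem summable_besselITerm (hα : -1 < α) (hx : 0 < x) : Summable (besselITerm α x) := by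
  refine summable_of_ratio_norm_eventually_le (r := 1 / 2) (by norm_num) ?_
  filter_upwards [Filter.eventually_ge_atTop ⌈x ^ 2⌉₊] with m hm
  have hm' : x ^ 2 ≤ m := Nat.ceil_le.mp hm
  have hm₀ := m.cast_nonneg (α := ℝ)
  have hmα : (0 : ℝ) < m + α + 1 := by linarith
  have hratio : (x / 2) ^ 2 / ((m + 1) * (m + α + 1)) ≤ 1 / 2 := by
    rw [div_le_iff₀ (by positivity)]
    nlinarith
  rw [besselITerm_succ hx hmα.ne', norm_mul, mul_comm, Real.norm_of_nonneg (by positivity)]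
  exact mul_le_mul_of_nonneg_right hratio (norm_nonneg _)

theorem hasSum_besselITerm (hα : -1 < α) (hx : 0 < x) :
    HasSum (besselITerm α x) (besselI α x) :=
  (summable_besselITerm hα hx).hasSum

theorem besselI_pos (hα : -1 < α) (hx : 0 < x) : 0 < besselI α x :=
  (summable_besselITerm hα hx).tsum_pos (fun m => (besselITerm_pos hα hx m).le) 0
    (besselITerm_pos hα hx 0)

theorem hasSum_mul_besselITerm (hα : -1 < α) (hx : 0 < x) :
    HasSum (fun m : ℕ => (m : ℝ) * besselITerm α x m) (x / 2 * besselI (α + 1) x) := by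
  rw [← hasSum_nat_add_iff' 1]
  simp only [Finset.range_one, Finset.sum_singleton, Nat.cast_zero, zero_mul, sub_zero]
  simp_rw [succ_mul_besselITerm_succ hx]
  exact (hasSum_besselITerm (by linarith) hx).mul_left (x / 2)

theorem mul_besselI_add_one_lt (hα : -1 < α) (hx : 0 < x) (hxα : x ^ 2 ≤ 2 * (α + 1)) :
    x * besselI (α + 1) x < besselI α x := by
  have hterm (m : ℕ) :
      x * besselITerm (α + 1) x m = besselITerm α x m * (x ^ 2 / (2 * (m + α + 1))) := by
    have hmα : (m : ℝ) + α + 1 ≠ 0 := by linarith [m.cast_nonneg (α := ℝ)]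
    rw [besselITerm_order_add_one hx hmα]
    field_simp
  have hfactor (m : ℕ) : x ^ 2 / (2 * (m + α + 1)) ≤ 1 := by
    rw [div_le_one (by linarith [m.cast_nonneg (α := ℝ)])]
    linarith [m.cast_nonneg (α := ℝ)]
  have hfactor_one : x ^ 2 / (2 * ((1 : ℕ) + α + 1)) < 1 := by
    rw [div_lt_one (by push_cast; linarith)]
    push_cast
    linarith
  refine hasSum_lt (f := fun m => x * besselITerm (α + 1) x m) (i := 1) (fun m => ?_) ?_
    ((hasSum_besselITerm (by linarith) hx).mul_left x) (hasSum_besselITerm hα hx)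
  · simp only [hterm]
    exact mul_le_of_le_one_right (besselITerm_pos hα hx m).le (hfactor m)
  · simp only [hterm]
    exact mul_lt_of_lt_one_right (besselITerm_pos hα hx 1) hfactor_one

theorem two_mul_besselI_lt (hα : -1 < α) (hx : 0 < x) (hxα : 2 * (α + 1) ≤ x ^ 2) :
    2 * besselI α x < 3 * (x * besselI (α + 1) x) := by
  have hsum : HasSum (fun m : ℕ => (3 * m - 1) * besselITerm α x m)
      (3 * (x / 2 * besselI (α + 1) x) - besselI α x) := by
    have hcombination : (fun m : ℕ => (3 * (m : ℝ) - 1) * besselITerm α x m) =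
        fun m => 3 * (m * besselITerm α x m) - besselITerm α x m := by
      funext m
      ring
    rw [hcombination]
    exact ((hasSum_mul_besselITerm hα hx).mul_left 3).sub (hasSum_besselITerm hα hx)
  have htwo_a₁ : 2 * besselITerm α x 1 = besselITerm α x 0 * (x ^ 2 / (2 * (α + 1))) := by
    have hα₁ : α + 1 ≠ 0 := by linarith
    have h := besselITerm_succ (m := 0) hx (by simpa using hα₁)
    simp only [Nat.cast_zero, zero_add, one_mul] at h
    rw [h]
    field_simp
  have hhead : besselITerm α x 0 ≤ 2 * besselITerm α x 1 := by
    have hfactor : 1 ≤ x ^ 2 / (2 * (α + 1)) := by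
      rw [le_div_iff₀ (by linarith)]
      linarith
    rw [htwo_a₁]
    exact le_mul_of_one_le_right (besselITerm_pos hα hx 0).le hfactor
  have hcoeff (m : ℕ) : 0 < 3 * ((m + 2 : ℕ) : ℝ) - 1 := by
    push_cast
    linarith [m.cast_nonneg (α := ℝ)]
  have htail : 0 < ∑' m : ℕ, (3 * ((m + 2 : ℕ) : ℝ) - 1) * besselITerm α x (m + 2) :=
    Summable.tsum_pos ((summable_nat_add_iff 2).mpr hsum.summable)
      (fun m => (mul_pos (hcoeff m) (besselITerm_pos hα hx _)).le) 0
      (mul_pos (hcoeff 0) (besselITerm_pos hα hx _))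
  have hsplit := hsum.summable.sum_add_tsum_nat_add 2
  rw [hsum.tsum_eq, Finset.sum_range_succ, Finset.sum_range_one] at hsplit
  simp only [Nat.cast_zero, Nat.cast_one] at hsplit
  linarith

end

theorem besselI_ratio_bound (d : ℕ) (hd : 1 ≤ d) :
    2 / 3 < Real.sqrt d * vmfMeanNorm d (Real.sqrt d) ∧
      Real.sqrt d * vmfMeanNorm d (Real.sqrt d) < 1 := by
  have hd' : (1 : ℝ) ≤ d := by exact_mod_cast hd
  have hx : 0 < √(d : ℝ) := sqrt_pos.mpr (by linarith)
  have hα : -1 < (d : ℝ) / 2 - 1 := by linarith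
  have hsq : √(d : ℝ) ^ 2 = 2 * ((d : ℝ) / 2 - 1 + 1) := by
    rw [sq_sqrt (by linarith)]
    ring
  have hI := besselI_pos hα hx
  have hA : √(d : ℝ) * vmfMeanNorm d √d =
      √(d : ℝ) * besselI ((d : ℝ) / 2 - 1 + 1) √d / besselI ((d : ℝ) / 2 - 1) √d := by
    rw [vmfMeanNorm, sub_add_cancel, mul_div_assoc]
  rw [hA, lt_div_iff₀ hI, div_lt_one hI]
  exact ⟨by linarith [two_mul_besselI_lt hα hx hsq.ge], mul_besselI_add_one_lt hα hx hsq.le⟩
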